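/- arXiv:2205.00492 — 10 statements merged into one kernel-verified Lean document; each statement's English description precedes it below -/
import Mathlib

section
/- For any two nonnegative real vectors x, y of length n whose entries sum to the same value, the earth mover's distance between x and y (defined as the minimum total cost of moving mass, where moving an amount α from coordinate i to coordinate j costs α·|i−j|) equals the ℓ1-distance between their prefix-sum vectors, i.e., emd(x,y) = Σ_{k=1}^{n} |Σ_{i≤k} x_i − Σ_{i≤k} y_i|. -/
/-!
Writing `cut k i = [i ≤ k]`, the distance `|i - j|` is the number of cuts `k` separating `i`
from `j`, so the cost of a transport plan `α` is `∑ k ∑ i j α i j |cut k i - cut k j|`. For fixed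
`k` the signed sum `∑ i j α i j (cut k i - cut k j)` is `X k - Y k` (prefix sums of `x` and `y`)
by the marginal conditions, and the triangle inequality gives `cost α ≥ ∑ k |X k - Y k|`.
Equality holds for the monotone plan, which sends the mass occupying `[X (i-1), X i]` to the
mass occupying `[Y (j-1), Y j]`: it never moves mass across a cut in both directions.
-/

open Finset

namespace EarthMover

variable {n : ℕ}

lemma abs_sum_sum_eq_sum_sum_abs {ι κ : Type*} {s : Finset ι} {u : Finset κ} {t : ι → κ → ℝ}
    (h : (∀ i j, 0 ≤ t i j) ∨ ∀ i j, t i j ≤ 0) :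
    |∑ i ∈ s, ∑ j ∈ u, t i j| = ∑ i ∈ s, ∑ j ∈ u, |t i j| := by
  rcases h with h | h
  · simp_rw [abs_of_nonneg (h _ _)]
    exact abs_of_nonneg (sum_nonneg fun i _ => sum_nonneg fun j _ => h i j)
  · simp_rw [abs_of_nonpos (h _ _), sum_neg_distrib]
    exact abs_of_nonpos (sum_nonpos fun i _ => sum_nonpos fun j _ => h i j)

lemma min_max_sub_min_max {a b c d : ℝ} (hab : a ≤ b) (hcd : c ≤ d) :
    min b (max a d) - min b (max a c) = max 0 (min b d - max a c) := by
  rcases le_total b d with h1 | h1 <;> rcases le_total a c with h2 | h2 <;>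
    rcases le_total a d with h3 | h3 <;> rcases le_total b c with h4 | h4 <;>
    simp only [min_def, max_def] <;> split_ifs <;> linarith

/-- `prefixSum x m = x 0 + ⋯ + x (m - 1)`, truncated at `m = n`. -/
noncomputable def prefixSum (x : Fin n → ℝ) (m : ℕ) : ℝ := ∑ i : Fin n with i.val < m, x i

section prefixSum

variable {x : Fin n → ℝ}

lemma prefixSum_mono (hx : ∀ i, 0 ≤ x i) : Monotone (prefixSum x) := fun _ _ hab =>
  sum_le_sum_of_subset_of_nonneg (monotone_filter_right _ fun _ _ h => h.trans_le hab)
    fun i _ _ => hx i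

lemma prefixSum_zero (x : Fin n → ℝ) : prefixSum x 0 = 0 := by simp [prefixSum]

lemma prefixSum_nonneg (hx : ∀ i, 0 ≤ x i) (m : ℕ) : 0 ≤ prefixSum x m :=
  prefixSum_zero x ▸ prefixSum_mono hx m.zero_le

lemma prefixSum_of_le {m : ℕ} (h : n ≤ m) : prefixSum x m = ∑ i, x i := by
  rw [prefixSum, filter_true_of_mem fun i _ => i.isLt.trans_le h]

lemma sum_Iic_eq_prefixSum (k : Fin n) : ∑ i ∈ Iic k, x i = prefixSum x (k + 1) := by
  rw [prefixSum]
  congr 1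
  ext i
  simp only [mem_Iic, mem_filter, mem_univ, true_and, Fin.le_def]
  omega

lemma prefixSum_succ (k : Fin n) : prefixSum x (k + 1) = prefixSum x k + x k := by
  rw [← sum_Iic_eq_prefixSum, Iic_eq_cons_Iio, sum_cons, add_comm, prefixSum]
  congr 2
  ext i
  simp only [mem_Iio, mem_filter, mem_univ, true_and, Fin.lt_def]

end prefixSum

def cut (k i : Fin n) : ℝ := if i ≤ k then 1 else 0

lemma sum_mul_cut (x : Fin n → ℝ) (k : Fin n) : ∑ i, x i * cut k i = ∑ i ∈ Iic k, x i := by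
  simp only [cut, mul_ite, mul_one, mul_zero, ← sum_filter, filter_ge_eq_Iic]

lemma abs_sub_eq_sum_abs_cut (i j : Fin n) : |(i : ℝ) - j| = ∑ k, |cut k i - cut k j| := by
  wlog hij : i ≤ j generalizing i j
  · simp_rw [abs_sub_comm _ (cut _ j), abs_sub_comm (i : ℝ)]
    exact this j i (le_of_not_ge hij)
  have hcut : ∀ k, |cut k i - cut k j| = if k ∈ Ico i j then 1 else 0 := by
    intro k
    by_cases hjk : j ≤ k
    · simp [cut, hjk, hij.trans hjk]
    · by_cases hik : i ≤ k <;> simp [cut, hik, hjk, mem_Ico]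
  simp_rw [hcut, sum_ite_mem, univ_inter, sum_const, Fin.card_Ico, nsmul_one,
    Nat.cast_sub (show (i : ℕ) ≤ j from hij), abs_sub_comm (i : ℝ)]
  exact abs_of_nonneg (sub_nonneg.2 (Nat.cast_le.2 hij))

noncomputable def transportCost (α : Fin n → Fin n → ℝ) : ℝ := ∑ i, ∑ j, α i j * |(i : ℝ) - j|

lemma transportCost_eq_sum_cut (α : Fin n → Fin n → ℝ) :
    transportCost α = ∑ k, ∑ i, ∑ j, α i j * |cut k i - cut k j| := by
  simp_rw [transportCost, abs_sub_eq_sum_abs_cut, mul_sum]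
  exact (sum_congr rfl fun i _ => sum_comm).trans sum_comm

lemma sum_transport_mul_cut {x y : Fin n → ℝ} {α : Fin n → Fin n → ℝ}
    (hrow : ∀ i, ∑ j, α i j = x i) (hcol : ∀ j, ∑ i, α i j = y j) (k : Fin n) :
    ∑ i, ∑ j, α i j * (cut k i - cut k j) = ∑ i ∈ Iic k, x i - ∑ i ∈ Iic k, y i := by
  simp_rw [mul_sub, sum_sub_distrib]
  rw [sum_comm (f := fun i j => α i j * cut k j)]
  simp_rw [← sum_mul, hrow, hcol, sum_mul_cut]

lemma sum_abs_sub_le_transportCost {x y : Fin n → ℝ} {α : Fin n → Fin n → ℝ}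
    (hα : ∀ i j, 0 ≤ α i j) (hrow : ∀ i, ∑ j, α i j = x i) (hcol : ∀ j, ∑ i, α i j = y j) :
    ∑ k, |∑ i ∈ Iic k, x i - ∑ i ∈ Iic k, y i| ≤ transportCost α := by
  rw [transportCost_eq_sum_cut]
  gcongr with k
  rw [← sum_transport_mul_cut hrow hcol k]
  calc |∑ i, ∑ j, α i j * (cut k i - cut k j)|
      ≤ ∑ i, |∑ j, α i j * (cut k i - cut k j)| := abs_sum_le_sum_abs _ _
    _ ≤ ∑ i, ∑ j, |α i j * (cut k i - cut k j)| := by gcongr; exact abs_sum_le_sum_abs _ _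
    _ = ∑ i, ∑ j, α i j * |cut k i - cut k j| := by simp_rw [abs_mul, abs_of_nonneg (hα _ _)]

/-- The north-west corner plan: the length of `[X i, X (i + 1)] ∩ [Y j, Y (j + 1)]` for
`X = prefixSum x`, `Y = prefixSum y`. -/
noncomputable def monotonePlan (x y : Fin n → ℝ) (i j : Fin n) : ℝ :=
  max 0 (min (prefixSum x (i + 1)) (prefixSum y (j + 1)) - max (prefixSum x i) (prefixSum y j))

section monotonePlan

variable {x y : Fin n → ℝ}

lemma monotonePlan_nonneg (x y : Fin n → ℝ) (i j : Fin n) : 0 ≤ monotonePlan x y i j :=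
  le_max_left _ _

lemma monotonePlan_comm (x y : Fin n → ℝ) (i j : Fin n) :
    monotonePlan x y i j = monotonePlan y x j i := by
  simp only [monotonePlan, min_comm, max_comm]

lemma sum_monotonePlan_right (hx : ∀ i, 0 ≤ x i) (hy : ∀ i, 0 ≤ y i)
    (hsum : ∑ i, x i = ∑ i, y i) (i : Fin n) : ∑ j, monotonePlan x y i j = x i := by
  set a := prefixSum x i
  set b := prefixSum x (i + 1)
  have hab : a ≤ b := prefixSum_mono hx i.val.le_succ
  let F : ℕ → ℝ := fun m => min b (max a (prefixSum y m))
  have hF0 : F 0 = a := by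
    show min b (max a (prefixSum y 0)) = a
    rw [prefixSum_zero, max_eq_left (prefixSum_nonneg hx _), min_eq_right hab]
  have hFn : F n = b := by
    have hXn : prefixSum y n = prefixSum x n := by
      rw [prefixSum_of_le le_rfl, prefixSum_of_le le_rfl, hsum]
    show min b (max a (prefixSum y n)) = b
    rw [hXn, max_eq_right (prefixSum_mono hx i.isLt.le), min_eq_left (prefixSum_mono hx i.isLt)]
  calc ∑ j, monotonePlan x y i j = ∑ j : Fin n, (F (j + 1) - F j) :=
        sum_congr rfl fun j _ => (min_max_sub_min_max hab (prefixSum_mono hy j.val.le_succ)).symm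
    _ = F n - F 0 := by rw [Fin.sum_univ_eq_sum_range (fun m => F (m + 1) - F m), sum_range_sub]
    _ = x i := by rw [hFn, hF0]; exact sub_eq_of_eq_add' (prefixSum_succ i)

lemma sum_monotonePlan_left (hx : ∀ i, 0 ≤ x i) (hy : ∀ i, 0 ≤ y i)
    (hsum : ∑ i, x i = ∑ i, y i) (j : Fin n) : ∑ i, monotonePlan x y i j = y j := by
  simp_rw [monotonePlan_comm x y _ j]
  exact sum_monotonePlan_right hy hx hsum.symm j

/-- Once the mass of `y` on `[0, k]` is covered by that of `x`, no mass crosses `k` leftwards. -/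
lemma monotonePlan_mul_cut_nonneg (hx : ∀ i, 0 ≤ x i) (hy : ∀ i, 0 ≤ y i) {k : Fin n}
    (hk : ∑ l ∈ Iic k, y l ≤ ∑ l ∈ Iic k, x l) (i j : Fin n) :
    0 ≤ monotonePlan x y i j * (cut k i - cut k j) := by
  by_cases hcross : k < i ∧ j ≤ k
  · obtain ⟨hki, hjk⟩ := hcross
    rw [sum_Iic_eq_prefixSum, sum_Iic_eq_prefixSum] at hk
    have hyx : prefixSum y (j + 1) ≤ prefixSum x i :=
      (prefixSum_mono hy (Nat.succ_le_succ hjk)).trans (hk.trans (prefixSum_mono hx hki))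
    have hzero : monotonePlan x y i j = 0 :=
      max_eq_left (sub_nonpos.2 ((min_le_right _ _).trans (hyx.trans (le_max_left _ _))))
    rw [hzero, zero_mul]
  · refine mul_nonneg (monotonePlan_nonneg x y i j) (sub_nonneg.2 ?_)
    unfold cut
    split_ifs <;> simp_all

lemma transportCost_monotonePlan (hx : ∀ i, 0 ≤ x i) (hy : ∀ i, 0 ≤ y i)
    (hsum : ∑ i, x i = ∑ i, y i) :
    transportCost (monotonePlan x y) = ∑ k, |∑ i ∈ Iic k, x i - ∑ i ∈ Iic k, y i| := by
  rw [transportCost_eq_sum_cut]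
  refine sum_congr rfl fun k _ => ?_
  have hsign : (∀ i j, 0 ≤ monotonePlan x y i j * (cut k i - cut k j)) ∨
      ∀ i j, monotonePlan x y i j * (cut k i - cut k j) ≤ 0 := by
    rcases le_total (∑ l ∈ Iic k, y l) (∑ l ∈ Iic k, x l) with hk | hk
    · exact .inl (monotonePlan_mul_cut_nonneg hx hy hk)
    · refine .inr fun i j => ?_
      rw [monotonePlan_comm, ← neg_sub, mul_neg, neg_nonpos]
      exact monotonePlan_mul_cut_nonneg hy hx hk j i
  rw [← sum_transport_mul_cut (sum_monotonePlan_right hx hy hsum)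
    (sum_monotonePlan_left hx hy hsum), abs_sum_sum_eq_sum_sum_abs hsign]
  simp_rw [abs_mul, abs_of_nonneg (monotonePlan_nonneg x y _ _)]

end monotonePlan

end EarthMover

open EarthMover

/-- The earth mover's distance (defined as the infimum of total transport cost over all
nonnegative transport plans with marginals `x` and `y`) equals the ℓ1-distance of the
prefix-sum vectors. -/
theorem stmt0 (n : ℕ) (x y : Fin n → ℝ)
    (hx : ∀ i, 0 ≤ x i) (hy : ∀ i, 0 ≤ y i)
    (hsum : ∑ i, x i = ∑ i, y i) :
    sInf {c : ℝ | ∃ α : Fin n → Fin n → ℝ,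
        (∀ i j, 0 ≤ α i j) ∧
        (∀ i, ∑ j, α i j = x i) ∧
        (∀ j, ∑ i, α i j = y j) ∧
        c = ∑ i, ∑ j, α i j * |(i : ℝ) - (j : ℝ)|} =
      ∑ k, |∑ i ∈ Finset.Iic k, x i - ∑ i ∈ Finset.Iic k, y i| := by
  refine IsLeast.csInf_eq ⟨⟨monotonePlan x y, monotonePlan_nonneg x y,
    sum_monotonePlan_right hx hy hsum, sum_monotonePlan_left hx hy hsum,
    (transportCost_monotonePlan hx hy hsum).symm⟩, ?_⟩
  rintro c ⟨α, hα, hrow, hcol, rfl⟩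
  exact sum_abs_sub_le_transportCost hα hrow hcol
end

section
/- For every fixed permutation σ of [m], the sum over all permutations τ of [m] of the Kendall tau (swap) distance between σ and τ equals m! · m(m−1)/4. Consequently, the swap isomorphic distance between the identity election ID (with m! identical votes) and the uniformity election UN (containing each of the m! possible votes once) over m candidates equals m! · m(m−1)/4. -/
/-!
For a fixed pair of candidates `a ≠ b`, precomposing `τ` with the transposition `swap a b` is an
involution on permutations that reverses the relative order of `a` and `b`, so it exchanges the
votes agreeing with `σ` on this pair with those disagreeing: exactly half of the `m!` votes
disagree. Summing over the `m.choose 2` pairs gives `m! * m.choose 2`, independently of `σ`; hence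
in `ID` against `UN` every candidate bijection and vote matching has this same cost.
-/

/-- The Kendall tau (swap) distance between two votes (permutations of `Fin m`,
giving each candidate a position): the number of pairs of candidates ranked in
opposite order. -/
def kendallTau {m : ℕ} (σ τ : Equiv.Perm (Fin m)) : ℕ :=
  (Finset.univ.filter (fun p : Fin m × Fin m =>
    p.1 < p.2 ∧ ¬((σ p.1 < σ p.2) ↔ (τ p.1 < τ p.2)))).card

/-- The swap isomorphic distance between two elections: minimum over candidate
bijections `π` and vote matchings `ρ` of the total Kendall tau distance of matched
votes. -/
noncomputable def swapElecDist {m n : ℕ} (X Y : Fin n → Equiv.Perm (Fin m)) : ℕ :=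
  sInf {d : ℕ | ∃ (π : Equiv.Perm (Fin m)) (ρ : Equiv.Perm (Fin n)),
    d = ∑ i, kendallTau (π.symm.trans (X i)) (Y (ρ i))}

open Finset Equiv Nat

theorem two_mul_card_perm_disagree_on_pair {α : Type*} [Fintype α] [DecidableEq α]
    [LinearOrder α] (σ : Perm α) {a b : α} (hab : a ≠ b) :
    2 * #{τ : Perm α | ¬((σ a < σ b) ↔ (τ a < τ b))} = (Fintype.card α)! := by
  have hflip : ∀ τ : Perm α,
      ((σ a < σ b) ↔ (τ b < τ a)) ↔ ¬((σ a < σ b) ↔ (τ a < τ b)) := by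
    intro τ
    rcases (τ.injective.ne hab).lt_or_gt with h | h <;> simp [h, h.not_gt]
  have hcard : #{τ : Perm α | (σ a < σ b) ↔ (τ a < τ b)}
      = #{τ : Perm α | ¬((σ a < σ b) ↔ (τ a < τ b))} :=
    card_equiv (Equiv.mulRight (swap a b)) (by simp [hflip])
  have htotal := card_filter_add_card_filter_not (s := (univ : Finset (Perm α)))
    (fun τ => (σ a < σ b) ↔ (τ a < τ b))
  rw [Finset.card_univ, Fintype.card_perm] at htotal
  omega

theorem kendallTau_eq_card_filter {m : ℕ} (σ τ : Perm (Fin m)) :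
    kendallTau σ τ =
      #{p ∈ {p : Fin m × Fin m | p.1 < p.2} | ¬((σ p.1 < σ p.2) ↔ (τ p.1 < τ p.2))} := by
  rw [kendallTau, filter_filter]

theorem two_mul_sum_kendallTau {m : ℕ} (σ : Perm (Fin m)) :
    2 * ∑ τ, kendallTau σ τ = m.choose 2 * m ! := by
  have hpairs := card_product_filter_lt (s := (univ : Finset (Fin m)))
  rw [univ_product_univ, Finset.card_fin] at hpairs
  calc 2 * ∑ τ, kendallTau σ τ
      = ∑ p ∈ ({p | p.1 < p.2} : Finset (Fin m × Fin m)),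
          2 * #{τ : Perm (Fin m) | ¬((σ p.1 < σ p.2) ↔ (τ p.1 < τ p.2))} := by
        simp only [kendallTau_eq_card_filter, card_filter]
        rw [sum_comm, mul_sum]
    _ = ∑ p ∈ ({p | p.1 < p.2} : Finset (Fin m × Fin m)), m ! := sum_congr rfl fun p hp => by
        simpa using two_mul_card_perm_disagree_on_pair σ (mem_filter.1 hp).2.ne
    _ = m.choose 2 * m ! := by
        rw [sum_const, smul_eq_mul, hpairs]

theorem four_mul_sum_kendallTau {m : ℕ} (σ : Perm (Fin m)) :
    4 * ∑ τ, kendallTau σ τ = m ! * (m * (m - 1)) := by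
  have h2 : 2 * m.choose 2 = m * (m - 1) := by
    rw [choose_two_right, Nat.mul_div_cancel' (even_mul_pred_self m).two_dvd]
  rw [show 4 = 2 * 2 from rfl, mul_assoc, two_mul_sum_kendallTau, ← mul_assoc, h2, mul_comm]

theorem swapElecDist_eq_of_forall {m n : ℕ} {X Y : Fin n → Perm (Fin m)} {d : ℕ}
    (h : ∀ (π : Perm (Fin m)) (ρ : Perm (Fin n)),
      ∑ i, kendallTau (π.symm.trans (X i)) (Y (ρ i)) = d) :
    swapElecDist X Y = d :=
  le_antisymm (Nat.sInf_le ⟨1, 1, (h 1 1).symm⟩)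
    (le_csInf ⟨d, 1, 1, (h 1 1).symm⟩ (by rintro _ ⟨π, ρ, rfl⟩; exact (h π ρ).ge))

/-- For every fixed permutation `σ`, the sum over all permutations `τ` of the Kendall tau
distance between `σ` and `τ` equals `m! · m(m−1)/4`; consequently the swap isomorphic
distance between the identity election `ID` (with `m!` identical votes) and the uniformity
election `UN` (containing every vote exactly once) equals `m! · m(m−1)/4`.
(Both equalities are stated multiplied by `4`.) -/
theorem stmt1 (m : ℕ) :
    (∀ σ : Equiv.Perm (Fin m),
      4 * ∑ τ : Equiv.Perm (Fin m), kendallTau σ τ = Nat.factorial m * (m * (m - 1))) ∧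
    (∀ U : Fin (Nat.factorial m) → Equiv.Perm (Fin m), Function.Bijective U →
      4 * swapElecDist (fun _ => (1 : Equiv.Perm (Fin m))) U
        = Nat.factorial m * (m * (m - 1))) := by
  refine ⟨four_mul_sum_kendallTau, fun U hU => ?_⟩
  have hsum_indep : ∀ σ : Perm (Fin m), ∑ τ, kendallTau σ τ = ∑ τ, kendallTau 1 τ := fun σ =>
    Nat.eq_of_mul_eq_mul_left (by norm_num : 0 < 4)
      ((four_mul_sum_kendallTau σ).trans (four_mul_sum_kendallTau 1).symm)
  rw [swapElecDist_eq_of_forall fun π ρ => ?_, four_mul_sum_kendallTau 1]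
  rw [← hsum_indep (π.symm.trans 1)]
  exact Fintype.sum_bijective _ (hU.comp ρ.bijective) _ _ fun _ => rfl
end

section
/- Let d be either the swap or the discrete isomorphic metric. For any two elections X and Y with m candidates and n = t·m! voters each, d(X,Y) ≤ d(ID, UN), where ID is the election with n identical votes and UN the election containing each of the m! possible votes exactly t times. -/
/-- Discrete distance between two votes: `0` if equal and `1` otherwise. -/
def discDist {m : ℕ} (σ τ : Equiv.Perm (Fin m)) : ℕ :=
  if σ = τ then 0 else 1

/-- The isomorphic distance between two elections induced by a vote distance `dv`:
minimum over candidate bijections `π` and vote matchings `ρ` of the sum of distances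
of matched votes. -/
noncomputable def elecDist {m n : ℕ}
    (dv : Equiv.Perm (Fin m) → Equiv.Perm (Fin m) → ℕ)
    (X Y : Fin n → Equiv.Perm (Fin m)) : ℕ :=
  sInf {d : ℕ | ∃ (π : Equiv.Perm (Fin m)) (ρ : Equiv.Perm (Fin n)),
    d = ∑ i, dv (π.symm.trans (X i)) (Y (ρ i))}

/-! Both vote distances are symmetric and invariant under relabelling the candidates
(right multiplication), so `∑ w, d σ w` is the same number `S` for every vote `σ`.
Hence `UN` is at distance exactly `t * S` from `ID`, whatever the bijections. For arbitrary
`X`, `Y`, summing the cost of the identity vote matching over all `m!` candidate bijections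
gives `n * S = m! * (t * S)`, so some bijection costs at most `t * S`. -/

open Equiv Finset

-- Counting ordered discordant pairs makes relabelling candidates a bijection of `Fin m × Fin m`.
lemma kendallTau_eq_card_discordant {m : ℕ} (σ τ : Perm (Fin m)) :
    kendallTau σ τ = #{p : Fin m × Fin m | σ p.1 < σ p.2 ∧ τ p.2 < τ p.1} := by
  refine card_nbij' (fun p => if σ p.1 < σ p.2 then p else p.swap)
    (fun p => if p.1 < p.2 then p else p.swap) ?_ ?_ ?_ ?_
  all_goals
    rintro ⟨a, b⟩
    have := σ.injective.eq_iff (a := a) (b := b)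
    have := τ.injective.eq_iff (a := a) (b := b)
    simp only [coe_filter, Set.mem_ofPred_eq, mem_univ, true_and, Prod.swap_prod_mk]
    split_ifs <;> grind

lemma kendallTau_comm {m : ℕ} (σ τ : Perm (Fin m)) : kendallTau σ τ = kendallTau τ σ := by
  simp only [kendallTau_eq_card_discordant]
  exact card_equiv (prodComm _ _) (by simp [and_comm])

lemma kendallTau_mul_right {m : ℕ} (σ τ ρ : Perm (Fin m)) :
    kendallTau (σ * ρ) (τ * ρ) = kendallTau σ τ := by
  simp only [kendallTau_eq_card_discordant]
  exact card_equiv (ρ.prodCongr ρ) fun p => by rw [mem_filter, mem_filter]; simp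

lemma discDist_comm {m : ℕ} (σ τ : Perm (Fin m)) : discDist σ τ = discDist τ σ := by
  simp [discDist, eq_comm]

lemma discDist_mul_right {m : ℕ} (σ τ ρ : Perm (Fin m)) :
    discDist (σ * ρ) (τ * ρ) = discDist σ τ := by
  simp [discDist]

lemma sum_comp_eq_mul_sum_of_card_fiber_eq {ι α M : Type*} [Fintype ι] [Fintype α]
    [DecidableEq α] [AddCommMonoid M] {U : ι → α} {t : ℕ}
    (hU : ∀ a, #{i | U i = a} = t) (f : α → M) :
    ∑ i, f (U i) = t • ∑ a, f a := by
  rw [← sum_fiberwise univ U (fun i => f (U i)), smul_sum]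
  refine sum_congr rfl fun a _ => ?_
  rw [sum_congr rfl fun i hi => congrArg f (mem_filter.mp hi).2, sum_const, hU]

section InvariantDistance

variable {G : Type*} [Group G] [Fintype G]

lemma sum_dist_left_eq_of_mul_right {dv : G → G → ℕ}
    (hinv : ∀ a b c, dv (a * c) (b * c) = dv a b) (σ : G) :
    ∑ τ, dv σ τ = ∑ τ, dv 1 τ :=
  Fintype.sum_equiv (Equiv.mulRight σ⁻¹) _ _ fun τ => by
    simpa using (hinv σ τ σ⁻¹).symm

lemma sum_dist_right_eq_of_mul_right {dv : G → G → ℕ} (hcomm : ∀ a b, dv a b = dv b a)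
    (hinv : ∀ a b c, dv (a * c) (b * c) = dv a b) (τ : G) :
    ∑ σ, dv σ τ = ∑ σ, dv 1 σ := by
  simp only [hcomm _ τ]
  exact sum_dist_left_eq_of_mul_right hinv τ

end InvariantDistance

section ElecDist

variable {m n : ℕ} {dv : Perm (Fin m) → Perm (Fin m) → ℕ}

lemma elecDist_le (X Y : Fin n → Perm (Fin m)) (π : Perm (Fin m)) (ρ : Perm (Fin n)) :
    elecDist dv X Y ≤ ∑ i, dv (π.symm.trans (X i)) (Y (ρ i)) :=
  Nat.sInf_le ⟨π, ρ, rfl⟩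

lemma le_elecDist {X Y : Fin n → Perm (Fin m)} {c : ℕ}
    (h : ∀ (π : Perm (Fin m)) (ρ : Perm (Fin n)), c ≤ ∑ i, dv (π.symm.trans (X i)) (Y (ρ i))) :
    c ≤ elecDist dv X Y :=
  le_csInf ⟨_, 1, 1, rfl⟩ fun _ ⟨π, ρ, hd⟩ => hd ▸ h π ρ

lemma elecDist_const_one_eq (hinv : ∀ a b c, dv (a * c) (b * c) = dv a b) {t : ℕ}
    {U : Fin n → Perm (Fin m)} (hU : ∀ w, #{i | U i = w} = t) :
    elecDist dv (fun _ => 1) U = t * ∑ w, dv 1 w := by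
  have hcost : ∀ (π : Perm (Fin m)) (ρ : Perm (Fin n)),
      ∑ i, dv (π.symm.trans 1) (U (ρ i)) = t * ∑ w, dv 1 w := fun π ρ => by
    rw [Equiv.sum_comp ρ (fun i => dv _ (U i)), sum_comp_eq_mul_sum_of_card_fiber_eq hU,
      sum_dist_left_eq_of_mul_right hinv, smul_eq_mul]
  exact le_antisymm (hcost 1 1 ▸ elecDist_le _ _ 1 1) (le_elecDist fun π ρ => (hcost π ρ).ge)

lemma elecDist_le_of_mul_factorial (hcomm : ∀ a b, dv a b = dv b a)
    (hinv : ∀ a b c, dv (a * c) (b * c) = dv a b) {t : ℕ} (hn : n = t * m.factorial)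
    (X Y : Fin n → Perm (Fin m)) :
    elecDist dv X Y ≤ t * ∑ w, dv 1 w := by
  have hπ : ∀ i, ∑ π : Perm (Fin m), dv (π.symm.trans (X i)) (Y i) = ∑ w, dv 1 w := fun i => by
    rw [← sum_dist_right_eq_of_mul_right hcomm hinv (Y i)]
    exact Fintype.sum_equiv ((Equiv.inv _).trans (Equiv.mulLeft (X i))) _ _ fun _ => rfl
  have htotal : ∑ π : Perm (Fin m), ∑ i, dv (π.symm.trans (X i)) (Y i) =
      ∑ _ : Perm (Fin m), t * ∑ w, dv 1 w := by
    rw [sum_comm, sum_congr rfl fun i _ => hπ i, sum_const, sum_const, card_univ, card_univ,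
      Fintype.card_fin, Fintype.card_perm, Fintype.card_fin, hn, smul_eq_mul, smul_eq_mul]
    ring
  obtain ⟨π, -, hle⟩ := exists_le_of_sum_le univ_nonempty htotal.le
  exact (elecDist_le X Y π 1).trans hle

end ElecDist

/-- Let `d` be the swap or the discrete isomorphic metric. For any two elections `X`, `Y`
with `m` candidates and `n = t·m!` voters each, `d(X,Y) ≤ d(ID,UN)`, where `ID` consists of
`n` identical votes and `UN` contains each of the `m!` possible votes exactly `t` times. -/
theorem stmt2 (m n t : ℕ) (hn : n = t * Nat.factorial m)
    (dv : Equiv.Perm (Fin m) → Equiv.Perm (Fin m) → ℕ)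
    (hdv : dv = kendallTau ∨ dv = discDist)
    (X Y : Fin n → Equiv.Perm (Fin m))
    (U : Fin n → Equiv.Perm (Fin m))
    (hU : ∀ w : Equiv.Perm (Fin m), (Finset.univ.filter (fun i => U i = w)).card = t) :
    elecDist dv X Y ≤ elecDist dv (fun _ => (1 : Equiv.Perm (Fin m))) U := by
  obtain ⟨hcomm, hinv⟩ : (∀ a b, dv a b = dv b a) ∧ ∀ a b c, dv (a * c) (b * c) = dv a b := by
    rcases hdv with rfl | rfl
    · exact ⟨kendallTau_comm, kendallTau_mul_right⟩
    · exact ⟨discDist_comm, discDist_mul_right⟩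
  rw [elecDist_const_one_eq hinv hU]
  exact elecDist_le_of_mul_factorial hcomm hinv hn X Y
end

section
/- For any two m×m bistochastic matrices X and Y (nonnegative real entries, each row and each column summing to 1), the minimum over permutations π of the columns of Σ_i ℓ1(x_i, y_{π(i)}) is at most 2m − 2, where x_i, y_i denote the i-th columns. Moreover this bound is attained by taking X the identity matrix and Y the matrix with all entries 1/m. -/
open Finset

lemma perm_sum_aux (n : ℕ) (g : Fin (n+1) → Fin (n+1) → ℝ) :
    ∑ π : Equiv.Perm (Fin (n+1)), ∑ i, g i (π i)
      = (Nat.factorial n : ℝ) * ∑ i, ∑ k, g i k := by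
  rw [Finset.sum_comm]
  rw [Finset.mul_sum]
  refine Finset.sum_congr rfl fun i _ => ?_
  have h1 : ∑ π : Equiv.Perm (Fin (n+1)), g i (π i)
      = ∑ π : Equiv.Perm (Fin (n+1)), g i (π 0) := by
    have := Equiv.sum_comp (Equiv.mulRight (Equiv.swap (0 : Fin (n+1)) i))
      (fun π : Equiv.Perm (Fin (n+1)) => g i (π 0))
    rw [← this]
    refine Finset.sum_congr rfl fun π _ => ?_
    simp [Equiv.Perm.mul_apply]
  rw [h1]
  rw [← Equiv.sum_comp Equiv.Perm.decomposeFin.symm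
    (fun π : Equiv.Perm (Fin (n+1)) => g i (π 0))]
  have h2 : ∀ x : Fin (n + 1) × Equiv.Perm (Fin n),
      (Equiv.Perm.decomposeFin.symm x) 0 = x.1 := fun x =>
    Equiv.Perm.decomposeFin_symm_apply_zero x.1 x.2
  simp only [h2]
  rw [Fintype.sum_prod_type]
  simp [Finset.sum_const, Fintype.card_perm, Finset.mul_sum, mul_comm]

lemma abs_sub_eq (a b : ℝ) : |a - b| = a + b - 2 * min a b := by
  rcases le_total a b with h | h
  · rw [abs_of_nonpos (by linarith), min_eq_left h]; ring
  · rw [abs_of_nonneg (by linarith), min_eq_right h]; ring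

/-- For any two `m × m` bistochastic matrices, the minimum over column matchings of the
summed ℓ1-distances of matched columns is at most `2m − 2`; moreover this bound is
attained by the identity matrix and the uniform matrix (all entries `1/m`). -/
theorem stmt3 (m : ℕ) (hm : 0 < m)
    (X Y : Matrix (Fin m) (Fin m) ℝ)
    (hX0 : ∀ i j, 0 ≤ X i j) (hY0 : ∀ i j, 0 ≤ Y i j)
    (hXrow : ∀ i, ∑ j, X i j = 1) (hXcol : ∀ j, ∑ i, X i j = 1)
    (hYrow : ∀ i, ∑ j, Y i j = 1) (hYcol : ∀ j, ∑ i, Y i j = 1) :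
    (∃ π : Equiv.Perm (Fin m),
      ∑ i : Fin m, ∑ j : Fin m, |X j i - Y j (π i)| ≤ 2 * (m : ℝ) - 2) ∧
    (∀ π : Equiv.Perm (Fin m),
      ∑ i : Fin m, ∑ j : Fin m,
        |(if j = π i then (1 : ℝ) else 0) - 1 / (m : ℝ)| = 2 * (m : ℝ) - 2) := by
  obtain ⟨n, rfl⟩ : ∃ n, m = n + 1 := ⟨m - 1, by omega⟩
  have hmR : ((n : ℝ) + 1) ≠ 0 := by positivity
  constructor
  · -- existence
    set g : Fin (n+1) → Fin (n+1) → ℝ := fun i k => ∑ j, min (X j i) (Y j k) with hg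
    have hX1 : ∀ j i, X j i ≤ 1 := fun j i => by
      rw [← hXrow j]
      exact Finset.single_le_sum (fun k _ => hX0 j k) (Finset.mem_univ i)
    have hY1 : ∀ j i, Y j i ≤ 1 := fun j i => by
      rw [← hYrow j]
      exact Finset.single_le_sum (fun k _ => hY0 j k) (Finset.mem_univ i)
    have hge : ((n : ℝ) + 1) ≤ ∑ i, ∑ k, g i k := by
      have key : ∀ i k, ∑ j, X j i * Y j k ≤ g i k := by
        intro i k
        refine Finset.sum_le_sum fun j _ => ?_
        exact le_min (by nlinarith [hX0 j i, hY0 j k, hY1 j k])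
          (by nlinarith [hX0 j i, hY0 j k, hX1 j i])
      calc ((n : ℝ) + 1) = ∑ j : Fin (n+1), (1 : ℝ) := by simp
        _ = ∑ j : Fin (n+1), (∑ i, X j i) * (∑ k, Y j k) := by
            refine Finset.sum_congr rfl fun j _ => ?_
            rw [hXrow j, hYrow j]; ring
        _ = ∑ j : Fin (n+1), ∑ i, ∑ k, X j i * Y j k := by
            refine Finset.sum_congr rfl fun j _ => ?_
            rw [Finset.sum_mul]
            exact Finset.sum_congr rfl fun i _ => by rw [Finset.mul_sum]
        _ = ∑ i, ∑ k, ∑ j, X j i * Y j k := by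
            rw [Finset.sum_comm]
            exact Finset.sum_congr rfl fun i _ => Finset.sum_comm
        _ ≤ ∑ i, ∑ k, g i k :=
            Finset.sum_le_sum fun i _ => Finset.sum_le_sum fun k _ => key i k
    have hexists : ∃ π : Equiv.Perm (Fin (n+1)), 1 ≤ ∑ i, g i (π i) := by
      by_contra h
      push_neg at h
      have hsum : ∑ π : Equiv.Perm (Fin (n+1)), ∑ i, g i (π i)
          < ∑ _π : Equiv.Perm (Fin (n+1)), (1 : ℝ) :=
        Finset.sum_lt_sum_of_nonempty Finset.univ_nonempty fun π _ => h π
      rw [perm_sum_aux] at hsum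
      rw [Finset.sum_const] at hsum
      have hcard : (Finset.univ : Finset (Equiv.Perm (Fin (n+1)))).card
          = Nat.factorial (n+1) := by
        rw [Finset.card_univ, Fintype.card_perm, Fintype.card_fin]
      rw [hcard] at hsum
      have hfac : (0 : ℝ) < (Nat.factorial n : ℝ) := by positivity
      have : (Nat.factorial n : ℝ) * ((n : ℝ) + 1)
          ≤ (Nat.factorial n : ℝ) * ∑ i, ∑ k, g i k :=
        mul_le_mul_of_nonneg_left hge hfac.le
      have hfac2 : ((Nat.factorial (n+1) : ℕ) : ℝ)
          = (Nat.factorial n : ℝ) * ((n : ℝ) + 1) := by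
        rw [Nat.factorial_succ]; push_cast; ring
      simp only [nsmul_eq_mul, mul_one] at hsum
      rw [hfac2] at hsum
      linarith
    obtain ⟨π, hπ⟩ := hexists
    refine ⟨π, ?_⟩
    have hsplit : ∑ i : Fin (n+1), ∑ j : Fin (n+1), |X j i - Y j (π i)|
        = (∑ i : Fin (n+1), ∑ j : Fin (n+1), X j i)
          + (∑ i : Fin (n+1), ∑ j : Fin (n+1), Y j (π i))
          - 2 * ∑ i, g i (π i) := by
      rw [Finset.mul_sum, ← Finset.sum_add_distrib, ← Finset.sum_sub_distrib]
      refine Finset.sum_congr rfl fun i _ => ?_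
      rw [hg]
      simp only
      rw [Finset.mul_sum, ← Finset.sum_add_distrib, ← Finset.sum_sub_distrib]
      exact Finset.sum_congr rfl fun j _ => abs_sub_eq _ _
    have hXs : ∑ i : Fin (n+1), ∑ j : Fin (n+1), X j i = (n : ℝ) + 1 := by
      have : ∀ i : Fin (n+1), ∑ j, X j i = 1 := hXcol
      simp [this]
    have hYs : ∑ i : Fin (n+1), ∑ j : Fin (n+1), Y j (π i) = (n : ℝ) + 1 := by
      have : ∀ i : Fin (n+1), ∑ j, Y j (π i) = 1 := fun i => hYcol (π i)
      simp [this]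
    rw [hsplit, hXs, hYs]
    push_cast
    linarith
  · intro π
    have h1 : ∀ i : Fin (n+1), ∑ j : Fin (n+1),
        |(if j = π i then (1 : ℝ) else 0) - 1 / ((n : ℝ) + 1)|
        = 2 - 2 / ((n : ℝ) + 1) := by
      intro i
      have hpos : (0 : ℝ) < (n : ℝ) + 1 := by positivity
      have hle : 1 / ((n : ℝ) + 1) ≤ 1 := by
        rw [div_le_one hpos]; linarith [Nat.cast_nonneg (α := ℝ) n]
      have hnn : (0 : ℝ) ≤ 1 / ((n : ℝ) + 1) := by positivity
      have step : ∀ j : Fin (n+1),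
          |(if j = π i then (1 : ℝ) else 0) - 1 / ((n : ℝ) + 1)|
          = (if j = π i then 1 - 2 / ((n : ℝ) + 1) else 0) + 1 / ((n : ℝ) + 1) := by
        intro j
        by_cases hj : j = π i
        · simp only [hj, if_pos rfl, ite_true]
          rw [abs_of_nonneg (by linarith)]
          ring
        · simp only [if_neg hj]
          rw [abs_of_nonpos (by linarith)]
          ring
      rw [Finset.sum_congr rfl fun j _ => step j]
      rw [Finset.sum_add_distrib, Finset.sum_const, Finset.sum_ite_eq']
      simp only [Finset.mem_univ, if_pos, Finset.card_univ, Fintype.card_fin,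
        nsmul_eq_mul]
      push_cast
      field_simp
      ring
    rw [show (((n:ℕ)+1 : ℕ) : ℝ) = (n : ℝ) + 1 by push_cast; ring]
    rw [Finset.sum_congr rfl fun i _ => h1 i]
    rw [Finset.sum_const, Finset.card_univ, Fintype.card_fin, nsmul_eq_mul]
    push_cast
    field_simp
end

section
/- The EMD-positionwise distance between the identity matrix I_m and the uniform bistochastic matrix U_m (all entries 1/m) equals (m² − 1)/3, where the distance is the minimum over column matchings of the sum of EMDs of matched columns. -/
lemma sum_id' (n : ℕ) : ∑ j ∈ Finset.range n, (j:ℝ) = n*(n-1)/2 := by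
  induction n with
  | zero => simp
  | succ k ih => rw [Finset.sum_range_succ, ih]; push_cast; ring

lemma sum_sq' (n : ℕ) : ∑ j ∈ Finset.range n, (j:ℝ)^2 = n*(n-1)*(2*n-1)/6 := by
  induction n with
  | zero => simp
  | succ k ih => rw [Finset.sum_range_succ, ih]; push_cast; ring

set_option maxHeartbeats 800000 in
/-- The EMD-positionwise distance between the identity matrix and the uniform bistochastic
matrix (all entries `1/m`) equals `(m² − 1)/3`: since all columns of the uniform matrix
are equal, every column matching `π` yields the same value, namely the sum over columns
of the EMD between the matched standard basis vector and the constant `1/m` vector. -/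
theorem stmt5 (m : ℕ) (hm : 0 < m) :
    ∀ π : Equiv.Perm (Fin m),
      ∑ i : Fin m, ∑ j : Fin m,
        |(∑ k ∈ Finset.Iic j, if k = π i then (1 : ℝ) else 0) -
          ∑ k ∈ Finset.Iic j, (1 / (m : ℝ))| = ((m : ℝ) ^ 2 - 1) / 3 := by
  intro π
  have hm' : (m:ℝ) ≠ 0 := Nat.cast_ne_zero.mpr hm.ne'
  set c : Fin m → ℝ := fun j => (((j:ℕ):ℝ)+1)/(m:ℝ) with hc
  have hcard : ∀ j : Fin m, (Finset.Iic j).card = (j:ℕ) + 1 := fun j => by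
    simp [Fin.card_Iic]
  have h2 : ∀ j : Fin m, (∑ _k ∈ Finset.Iic j, (1 / (m : ℝ))) = c j := by
    intro j
    rw [Finset.sum_const, hcard, nsmul_eq_mul, hc]
    push_cast; ring
  have h1 : ∀ (a j : Fin m), (∑ k ∈ Finset.Iic j, if k = a then (1:ℝ) else 0)
      = if a ≤ j then 1 else 0 := by
    intro a j
    rw [Finset.sum_ite_eq' (Finset.Iic j) a (fun _ => (1:ℝ))]; simp
  have habs : ∀ (a j : Fin m),
      |(if a ≤ j then (1:ℝ) else 0) - c j|
        = c j + if a ≤ j then 1 - 2 * c j else 0 := by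
    intro a j
    have hj1 : (1:ℝ) ≤ (m:ℝ) - ((j:ℕ):ℝ) := by
      have : (j:ℕ) + 1 ≤ m := j.2
      have := (Nat.cast_le (α := ℝ)).mpr this
      push_cast at this; linarith
    have hc0 : (0:ℝ) ≤ c j := by rw [hc]; positivity
    have hc1 : c j ≤ 1 := by
      rw [hc]; rw [div_le_one (by positivity)]; linarith
    by_cases h : a ≤ j
    · rw [if_pos h, if_pos h, abs_of_nonneg (by linarith)]; ring
    · rw [if_neg h, if_neg h, abs_of_nonpos (by linarith)]; ring
  have h3 : ∀ j : Fin m,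
      ∑ i : Fin m, |(if i ≤ j then (1:ℝ) else 0) - c j|
        = (m:ℝ) * c j + (((j:ℕ):ℝ)+1) * (1 - 2 * c j) := by
    intro j
    simp only [habs]
    rw [Finset.sum_add_distrib, Finset.sum_const, Finset.card_univ, Fintype.card_fin,
      nsmul_eq_mul]
    congr 1
    have e : ∀ i : Fin m, (if i ≤ j then (1:ℝ) - 2 * c j else 0)
        = if i ∈ Finset.Iic j then (1:ℝ) - 2 * c j else 0 := by
      intro i; simp [Finset.mem_Iic]
    rw [Finset.sum_congr rfl (fun i _ => e i), Finset.sum_ite_mem, Finset.univ_inter,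
      Finset.sum_const, hcard, nsmul_eq_mul]
    push_cast; ring
  calc ∑ i : Fin m, ∑ j : Fin m,
        |(∑ k ∈ Finset.Iic j, if k = π i then (1 : ℝ) else 0) -
          ∑ k ∈ Finset.Iic j, (1 / (m : ℝ))|
      = ∑ i : Fin m, ∑ j : Fin m, |(if π i ≤ j then (1:ℝ) else 0) - c j| := by
        simp only [h1, h2]
    _ = ∑ i : Fin m, ∑ j : Fin m, |(if i ≤ j then (1:ℝ) else 0) - c j| :=
        Equiv.sum_comp π (fun a => ∑ j : Fin m, |(if a ≤ j then (1:ℝ) else 0) - c j|)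
    _ = ∑ j : Fin m, ∑ i : Fin m, |(if i ≤ j then (1:ℝ) else 0) - c j| :=
        Finset.sum_comm
    _ = ∑ j : Fin m, ((m:ℝ) * c j + (((j:ℕ):ℝ)+1) * (1 - 2 * c j)) := by
        simp only [h3]
    _ = ∑ j ∈ Finset.range m,
          ((m:ℝ) * (((j:ℝ)+1)/(m:ℝ)) + ((j:ℝ)+1) * (1 - 2 * (((j:ℝ)+1)/(m:ℝ)))) :=
        Fin.sum_univ_eq_sum_range
          (fun j => (m:ℝ) * (((j:ℝ)+1)/(m:ℝ)) + ((j:ℝ)+1) * (1 - 2 * (((j:ℝ)+1)/(m:ℝ)))) m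
    _ = ((m : ℝ) ^ 2 - 1) / 3 := by
        have e : ∀ j ∈ Finset.range m,
            ((m:ℝ) * (((j:ℝ)+1)/(m:ℝ)) + ((j:ℝ)+1) * (1 - 2 * (((j:ℝ)+1)/(m:ℝ))))
              = (2/(m:ℝ)) * (((m:ℝ)-2) * (j:ℝ) + ((m:ℝ)-1) - (j:ℝ)^2) := by
          intro j _
          field_simp
          ring
        rw [Finset.sum_congr rfl e, ← Finset.mul_sum]
        rw [Finset.sum_sub_distrib, Finset.sum_add_distrib, ← Finset.mul_sum,
          Finset.sum_const, Finset.card_range, sum_id', sum_sq', nsmul_eq_mul]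
        field_simp
        ring
end

section
/- Let X and Y be m×m bistochastic matrices with prefix-summed columns x̂_i and ŷ_i (so x̂_{i,j} = Σ_{k≤j} X_{k,i}). Then for every j ∈ [m], Σ_{i=1}^m x̂_{i,j} = j (the cumulative rows property), and Σ_i emd(x_i, y_i) = m(m+1) − 2·Σ_{i,j} min(x̂_{i,j}, ŷ_{i,j}). -/
/-- For bistochastic matrices `X`, `Y` with prefix-summed columns `x̂ i j = Σ_{k ≤ j} X k i`:
(i) the cumulative rows property `Σ_i x̂ i j = j` (with 1-based row index, i.e. `j + 1`
for `j : Fin m`), and (ii) the identity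
`Σ_i emd(x_i, y_i) = m(m+1) − 2 Σ_{i,j} min(x̂ i j, ŷ i j)`. -/
theorem stmt8 (m : ℕ)
    (X Y : Matrix (Fin m) (Fin m) ℝ)
    (hX0 : ∀ i j, 0 ≤ X i j) (hY0 : ∀ i j, 0 ≤ Y i j)
    (hXrow : ∀ i, ∑ j, X i j = 1) (hXcol : ∀ j, ∑ i, X i j = 1)
    (hYrow : ∀ i, ∑ j, Y i j = 1) (hYcol : ∀ j, ∑ i, Y i j = 1) :
    (∀ j : Fin m, ∑ i : Fin m, ∑ k ∈ Finset.Iic j, X k i = (j : ℝ) + 1) ∧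
    ∑ i : Fin m, ∑ j : Fin m,
        |(∑ k ∈ Finset.Iic j, X k i) - (∑ k ∈ Finset.Iic j, Y k i)| =
      (m : ℝ) * ((m : ℝ) + 1) -
        2 * ∑ i : Fin m, ∑ j : Fin m,
          min (∑ k ∈ Finset.Iic j, X k i) (∑ k ∈ Finset.Iic j, Y k i) := by
  have hcum : ∀ (Z : Matrix (Fin m) (Fin m) ℝ), (∀ k, ∑ i, Z k i = 1) →
      ∀ j : Fin m, ∑ i : Fin m, ∑ k ∈ Finset.Iic j, Z k i = (j : ℝ) + 1 := by
    intro Z hZ j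
    rw [Finset.sum_comm]
    have : ∀ k ∈ Finset.Iic j, ∑ i : Fin m, Z k i = 1 := fun k _ => hZ k
    rw [Finset.sum_congr rfl this, Finset.sum_const, Fin.card_Iic]
    push_cast
    ring
  refine ⟨hcum X hXrow, ?_⟩
  have key : ∀ i j : Fin m,
      |(∑ k ∈ Finset.Iic j, X k i) - (∑ k ∈ Finset.Iic j, Y k i)| =
      (∑ k ∈ Finset.Iic j, X k i) + (∑ k ∈ Finset.Iic j, Y k i) -
        2 * min (∑ k ∈ Finset.Iic j, X k i) (∑ k ∈ Finset.Iic j, Y k i) := by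
    intro i j
    rcases le_total (∑ k ∈ Finset.Iic j, X k i) (∑ k ∈ Finset.Iic j, Y k i) with h | h
    · rw [min_eq_left h, abs_of_nonpos (by linarith)]; ring
    · rw [min_eq_right h, abs_of_nonneg (by linarith)]; ring
  simp only [key, Finset.sum_sub_distrib, Finset.sum_add_distrib, ← Finset.mul_sum]
  have hsum : ∀ (Z : Matrix (Fin m) (Fin m) ℝ), (∀ k, ∑ i, Z k i = 1) →
      ∑ i : Fin m, ∑ j : Fin m, ∑ k ∈ Finset.Iic j, Z k i
        = (m : ℝ) * ((m : ℝ) + 1) / 2 := by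
    intro Z hZ
    rw [Finset.sum_comm]
    have : ∀ j : Fin m, ∑ i : Fin m, ∑ k ∈ Finset.Iic j, Z k i = (j : ℝ) + 1 :=
      hcum Z hZ
    rw [Finset.sum_congr rfl (fun j _ => this j)]
    have gauss : ∀ n : ℕ, ∑ j : Fin n, ((j : ℝ) + 1) = (n : ℝ) * ((n : ℝ) + 1) / 2 := by
      intro n
      induction n with
      | zero => simp
      | succ n ih => rw [Fin.sum_univ_castSucc]; simp only [Fin.coe_castSucc, Fin.val_last]; push_cast [ih]; ring
    exact gauss m
  rw [hsum X hXrow, hsum Y hYrow]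
  ring
end

section
/- Let z and z' be nonincreasing vectors in ℝ^m with equal sums, where z' is obtained from z by adding 1 to coordinate i and subtracting 1 from coordinate j for some i < j (and z' is still nonincreasing). Let u be the constant vector with all entries equal to the common average (so the entries of z, z', u sum to the same value), and let v be any nonincreasing vector with the same sum such that every prefix sum of v is at least the corresponding prefix sum of both z and z'. Then emd(z,u) − emd(z',u) = i − j and emd(z,v) − emd(z',v) = j − i; in particular emd(z,u) + emd(z,v) = emd(z',u) + emd(z',v). -/
open Finset

/-- Earth mover's distance between vectors of equal sum: ℓ1-distance of prefix sums. -/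
noncomputable def emd {m : ℕ} (x y : Fin m → ℝ) : ℝ :=
  ∑ t : Fin m, |(∑ k ∈ Finset.Iic t, x k) - (∑ k ∈ Finset.Iic t, y k)|

lemma prefix_avg {m : ℕ} (x : Fin m → ℝ) (hx : Antitone x) (t : Fin m) :
    ((t : ℕ) + 1 : ℝ) * (∑ k, x k) / m ≤ ∑ k ∈ Finset.Iic t, x k := by
  have hm : 0 < m := t.pos
  have hsplit : ∑ k, x k = (∑ k ∈ Finset.Iic t, x k) + ∑ k ∈ (Finset.Iic t)ᶜ, x k :=
    (Finset.sum_add_sum_compl _ _).symm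
  have h1 : ((t : ℕ) + 1 : ℝ) * x t ≤ ∑ k ∈ Finset.Iic t, x k := by
    have := Finset.card_nsmul_le_sum (Finset.Iic t) x (x t)
      (fun k hk => hx (Finset.mem_Iic.mp hk))
    simpa [Fin.card_Iic, nsmul_eq_mul] using this
  have h2 : ∑ k ∈ (Finset.Iic t)ᶜ, x k ≤ ((m - ((t : ℕ) + 1) : ℕ) : ℝ) * x t := by
    have := Finset.sum_le_card_nsmul ((Finset.Iic t)ᶜ) x (x t)
      (fun k hk => hx (le_of_lt (by simpa [Finset.mem_compl, Finset.mem_Iic, not_le] using hk)))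
    have hcard : ((Finset.Iic t)ᶜ : Finset (Fin m)).card = m - ((t : ℕ) + 1) := by
      rw [Finset.card_compl, Fin.card_Iic, Fintype.card_fin]
    simpa [hcard, nsmul_eq_mul] using this
  have ht : (t : ℕ) + 1 ≤ m := t.2
  have hc : ((m - ((t : ℕ) + 1) : ℕ) : ℝ) = (m : ℝ) - ((t : ℕ) + 1) := by
    push_cast [Nat.cast_sub ht]; ring
  rw [hc] at h2
  rw [div_le_iff₀ (by positivity)]
  have hmt : (0:ℝ) ≤ (m : ℝ) - ((t : ℕ) + 1) := by
    have : ((t:ℕ) + 1 : ℝ) ≤ m := by exact_mod_cast ht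
    linarith
  nlinarith [hsplit]

/-- Let `z'` be obtained from a nonincreasing vector `z` by adding `1` at coordinate `i`
and subtracting `1` at coordinate `j` (`i < j`), with `z'` still nonincreasing. Let `u`
be the constant vector with the common average value and `v` a nonincreasing vector of
the same sum whose prefix sums dominate those of `z` and `z'`. Then
`emd(z,u) − emd(z',u) = i − j`, `emd(z,v) − emd(z',v) = j − i`, and in particular
`emd(z,u) + emd(z,v) = emd(z',u) + emd(z',v)`. -/
theorem stmt9 (m : ℕ) (hm : 0 < m) (i j : Fin m) (hij : i < j)
    (z z' : Fin m → ℝ) (hz : Antitone z)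
    (hz'def : z' = fun k => z k + (if k = i then (1 : ℝ) else 0) - (if k = j then 1 else 0))
    (hz' : Antitone z')
    (u : Fin m → ℝ) (hu : u = fun _ => (∑ k, z k) / m)
    (v : Fin m → ℝ) (hv : Antitone v) (hvs : ∑ k, v k = ∑ k, z k)
    (hdom : ∀ t : Fin m,
      (∑ k ∈ Finset.Iic t, z k ≤ ∑ k ∈ Finset.Iic t, v k) ∧
      (∑ k ∈ Finset.Iic t, z' k ≤ ∑ k ∈ Finset.Iic t, v k)) :
    emd z u - emd z' u = (i : ℝ) - (j : ℝ) ∧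
    emd z v - emd z' v = (j : ℝ) - (i : ℝ) ∧
    emd z u + emd z v = emd z' u + emd z' v := by
  -- prefix sums of z'
  have hZ' : ∀ t : Fin m, ∑ k ∈ Finset.Iic t, z' k =
      (∑ k ∈ Finset.Iic t, z k) + (if i ≤ t then (1:ℝ) else 0) - (if j ≤ t then 1 else 0) := by
    intro t
    subst hz'def
    simp only [Finset.sum_sub_distrib, Finset.sum_add_distrib,
      Finset.sum_ite_eq' (Finset.Iic t), Finset.mem_Iic]
  have hsum' : ∑ k, z' k = ∑ k, z k := by
    subst hz'def
    simp [Finset.sum_sub_distrib, Finset.sum_add_distrib,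
      Finset.sum_ite_eq' (Finset.univ : Finset (Fin m))]
  -- prefix sums of u
  have hU : ∀ t : Fin m, ∑ k ∈ Finset.Iic t, u k = ((t:ℕ) + 1 : ℝ) * (∑ k, z k) / m := by
    intro t
    rw [hu, Finset.sum_const, Fin.card_Iic, nsmul_eq_mul]
    push_cast; ring
  have hzu : ∀ t : Fin m, ∑ k ∈ Finset.Iic t, u k ≤ ∑ k ∈ Finset.Iic t, z k := by
    intro t; rw [hU]; exact prefix_avg z hz t
  have hz'u : ∀ t : Fin m, ∑ k ∈ Finset.Iic t, u k ≤ ∑ k ∈ Finset.Iic t, z' k := by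
    intro t; rw [hU, ← hsum']; exact prefix_avg z' hz' t
  -- indicator sums
  have hind : ∀ a : Fin m, ∑ t : Fin m, (if a ≤ t then (1:ℝ) else 0) = (m : ℝ) - (a : ℕ) := by
    intro a
    rw [Finset.sum_boole]
    have : Finset.univ.filter (fun t => a ≤ t) = Finset.Ici a := by
      ext t; simp
    rw [this, Fin.card_Ici]
    have := a.2
    push_cast [Nat.cast_sub (le_of_lt a.2)]; ring
  have hdiff : ∑ t : Fin m, ((∑ k ∈ Finset.Iic t, z' k) - (∑ k ∈ Finset.Iic t, z k))
      = (j : ℝ) - (i : ℝ) := by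
    have : ∀ t : Fin m, (∑ k ∈ Finset.Iic t, z' k) - (∑ k ∈ Finset.Iic t, z k)
        = (if i ≤ t then (1:ℝ) else 0) - (if j ≤ t then 1 else 0) := by
      intro t; rw [hZ' t]; ring
    simp only [this, Finset.sum_sub_distrib, hind]
    ring
  have e1 : emd z u - emd z' u = (i : ℝ) - (j : ℝ) := by
    unfold emd
    rw [← Finset.sum_sub_distrib]
    have : ∀ t : Fin m,
        |(∑ k ∈ Finset.Iic t, z k) - (∑ k ∈ Finset.Iic t, u k)| -
        |(∑ k ∈ Finset.Iic t, z' k) - (∑ k ∈ Finset.Iic t, u k)| =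
        -((∑ k ∈ Finset.Iic t, z' k) - (∑ k ∈ Finset.Iic t, z k)) := by
      intro t
      rw [abs_of_nonneg (by linarith [hzu t]), abs_of_nonneg (by linarith [hz'u t])]
      ring
    simp only [this, Finset.sum_neg_distrib, hdiff]
    ring
  have e2 : emd z v - emd z' v = (j : ℝ) - (i : ℝ) := by
    unfold emd
    rw [← Finset.sum_sub_distrib]
    have : ∀ t : Fin m,
        |(∑ k ∈ Finset.Iic t, z k) - (∑ k ∈ Finset.Iic t, v k)| -
        |(∑ k ∈ Finset.Iic t, z' k) - (∑ k ∈ Finset.Iic t, v k)| =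
        (∑ k ∈ Finset.Iic t, z' k) - (∑ k ∈ Finset.Iic t, z k) := by
      intro t
      rw [abs_of_nonpos (by linarith [(hdom t).1]), abs_of_nonpos (by linarith [(hdom t).2])]
      ring
    simp only [this, hdiff]
  exact ⟨e1, e2, by linarith⟩
end

section
/- Under the Bordawise metric, every election with m candidates and n voters lies on the diameter between ID and UN: d_Borda(E, ID) + d_Borda(E, UN) = d_Borda(ID, UN), where d_Borda(E,E') = emd(sort(B_E), sort(B_{E'})) for sorted Borda score vectors. -/
/-- Borda score vector of an election with votes `E i : Equiv.Perm (Fin m)` (the vote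
assigns each candidate its position, `0`-based): `B(c) = Σ_v (m − 1 − pos_v(c))`. -/
noncomputable def bordaVec {m n : ℕ} (E : Fin n → Equiv.Perm (Fin m)) : Fin m → ℝ :=
  fun c => ∑ v, ((m : ℝ) - 1 - ((E v c : ℕ) : ℝ))

open Finset Equiv

theorem sum_Iic_eq_sum_ite_mul {ι α : Type*} [Fintype ι] [LinearOrder ι]
    [LocallyFiniteOrderBot ι] [NonAssocSemiring α] (f : ι → α) (t : ι) :
    ∑ i ∈ Iic t, f i = ∑ i, (if i ≤ t then 1 else 0) * f i := by
  simp only [ite_mul, one_mul, zero_mul, ← sum_filter, filter_ge_eq_Iic]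

theorem antitone_ite_le {ι α : Type*} [LinearOrder ι] [Semiring α] [PartialOrder α]
    [IsOrderedRing α] (t : ι) : Antitone fun i : ι => if i ≤ t then (1 : α) else 0 :=
  fun i j hij => by
    dsimp only
    split_ifs with hj hi <;> first | exact absurd (hij.trans hj) hi | simp

section PrefixSums

variable {ι α : Type*} [Fintype ι] [LinearOrder ι] [LocallyFiniteOrderBot ι]
  [CommRing α] [LinearOrder α] [IsStrictOrderedRing α]

theorem Antitone.sum_Iic_comp_perm_le {g : ι → α} (hg : Antitone g) (τ : Perm ι) (t : ι) :
    ∑ i ∈ Iic t, g (τ i) ≤ ∑ i ∈ Iic t, g i := by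
  simp only [sum_Iic_eq_sum_ite_mul]
  exact ((antitone_ite_le t).monovary hg).sum_mul_comp_perm_le_sum_mul

theorem Antitone.sum_Iic_const_le {x : ι → α} (hx : Antitone x) {c : α}
    (hc : ∑ i, x i = Fintype.card ι * c) (t : ι) :
    ∑ _i ∈ Iic t, c ≤ ∑ i ∈ Iic t, x i := by
  have cheb := ((antitone_ite_le t).monovary hx).sum_mul_sum_le_card_mul_sum
  have hcard : (0 : α) < Fintype.card ι := by exact_mod_cast Fintype.card_pos_iff.mpr ⟨t⟩
  rw [← sum_Iic_eq_sum_ite_mul, hc, sum_boole, filter_ge_eq_Iic, mul_left_comm] at cheb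
  rw [sum_const, nsmul_eq_mul]
  exact le_of_mul_le_mul_left cheb hcard

end PrefixSums

theorem emd_add_emd_eq_of_sum_Iic_le {m : ℕ} {x y z : Fin m → ℝ}
    (hyx : ∀ t, ∑ k ∈ Iic t, y k ≤ ∑ k ∈ Iic t, x k)
    (hxz : ∀ t, ∑ k ∈ Iic t, x k ≤ ∑ k ∈ Iic t, z k) :
    emd x z + emd x y = emd z y := by
  rw [emd, emd, emd, ← sum_add_distrib]
  refine sum_congr rfl fun t _ => ?_
  rw [abs_of_nonpos (sub_nonpos.2 (hxz t)), abs_of_nonneg (sub_nonneg.2 (hyx t)),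
    abs_of_nonneg (sub_nonneg.2 ((hyx t).trans (hxz t)))]
  ring

theorem Fin.sum_univ_sub_one_sub_val (m : ℕ) :
    ∑ c : Fin m, ((m : ℝ) - 1 - (c : ℕ)) = m * (m - 1) / 2 := by
  have gauss := congrArg (Nat.cast (R := ℝ)) (Finset.sum_range_id_mul_two m)
  rw [Fin.sum_univ_eq_sum_range (fun i => (m : ℝ) - 1 - i) m]
  simp only [sum_sub_distrib, Finset.sum_const, card_range, nsmul_eq_mul]
  rcases m with _ | m
  · simp
  · push_cast at gauss ⊢
    linarith

theorem sum_bordaVec {m n : ℕ} (E : Fin n → Perm (Fin m)) :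
    ∑ c, bordaVec E c = m * ((n : ℝ) * (m - 1) / 2) := by
  have vote (p : Perm (Fin m)) : ∑ c, ((m : ℝ) - 1 - (p c : ℕ)) = m * (m - 1) / 2 :=
    (Equiv.sum_comp p fun c => (m : ℝ) - 1 - (c : ℕ)).trans
      (Fin.sum_univ_sub_one_sub_val m)
  simp only [bordaVec]
  rw [sum_comm, sum_congr rfl fun v _ => vote (E v), sum_const, card_univ, Fintype.card_fin,
    nsmul_eq_mul]
  ring

theorem sum_Iic_bordaVec_comp_le {m n : ℕ} (E : Fin n → Perm (Fin m)) (σ : Perm (Fin m))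
    (t : Fin m) :
    ∑ k ∈ Iic t, bordaVec E (σ k) ≤ ∑ k ∈ Iic t, (n : ℝ) * ((m : ℝ) - 1 - (k : ℕ)) := by
  set g : Fin m → ℝ := fun k => (m : ℝ) - 1 - (k : ℕ)
  have hg : Antitone g := fun i j hij => by simp only [g]; gcongr; exact hij
  calc ∑ k ∈ Iic t, bordaVec E (σ k) = ∑ v, ∑ k ∈ Iic t, g ((σ.trans (E v)) k) := by
        simp only [bordaVec, g, Equiv.trans_apply]; exact sum_comm
    _ ≤ ∑ _v : Fin n, ∑ k ∈ Iic t, g k :=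
        sum_le_sum fun v _ => hg.sum_Iic_comp_perm_le _ t
    _ = _ := by rw [sum_const, card_univ, Fintype.card_fin, nsmul_eq_mul, mul_sum]

theorem stmt10_general (m n : ℕ)
    (E : Fin n → Equiv.Perm (Fin m))
    (σ : Equiv.Perm (Fin m)) (hσ : Antitone (fun c => bordaVec E (σ c))) :
    emd (fun c => bordaVec E (σ c))
        (fun k : Fin m => (n : ℝ) * ((m : ℝ) - 1 - ((k : ℕ) : ℝ))) +
      emd (fun c => bordaVec E (σ c))
        (fun _ : Fin m => (n : ℝ) * ((m : ℝ) - 1) / 2) =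
      emd (fun k : Fin m => (n : ℝ) * ((m : ℝ) - 1 - ((k : ℕ) : ℝ)))
        (fun _ : Fin m => (n : ℝ) * ((m : ℝ) - 1) / 2) := by
  have hsum : ∑ k, bordaVec E (σ k) = Fintype.card (Fin m) * ((n : ℝ) * (m - 1) / 2) := by
    rw [Equiv.sum_comp σ (bordaVec E), sum_bordaVec, Fintype.card_fin]
  exact emd_add_emd_eq_of_sum_Iic_le (hσ.sum_Iic_const_le hsum)
    (sum_Iic_bordaVec_comp_le E σ)

/-- Under the Bordawise metric every election lies on the diameter between `ID` and `UN`: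
`d_Borda(E, ID) + d_Borda(E, UN) = d_Borda(ID, UN)`, where the sorted Borda score vector
of `E` is given via a sorting permutation `σ`, the sorted Borda vector of `ID` is
`(n(m−1), n(m−2), ..., 0)` and that of `UN` is constantly `n(m−1)/2`. -/
theorem stmt10 (m n : ℕ) (hm : 0 < m) (hdvd : Nat.factorial m ∣ n)
    (E : Fin n → Equiv.Perm (Fin m))
    (σ : Equiv.Perm (Fin m)) (hσ : Antitone (fun c => bordaVec E (σ c))) :
    emd (fun c => bordaVec E (σ c))
        (fun k : Fin m => (n : ℝ) * ((m : ℝ) - 1 - ((k : ℕ) : ℝ))) +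
      emd (fun c => bordaVec E (σ c))
        (fun _ : Fin m => (n : ℝ) * ((m : ℝ) - 1) / 2) =
      emd (fun k : Fin m => (n : ℝ) * ((m : ℝ) - 1 - ((k : ℕ) : ℝ)))
        (fun _ : Fin m => (n : ℝ) * ((m : ℝ) - 1) / 2) :=
  stmt10_general m n E σ hσ
end

section
/- The Bordawise distance between ID and UN for m candidates (m even) and n voters is n(m³ − m)/12, i.e., emd((n(m−1), n(m−2), ..., n, 0), (n(m−1)/2, ..., n(m−1)/2)) = n·m(m²−1)/12. -/
lemma sum_range_cast_succ (m : ℕ) :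
    ∑ t ∈ Finset.range m, ((t : ℝ) + 1) = m * (m + 1) / 2 := by
  induction m with
  | zero => simp
  | succ m ih => rw [Finset.sum_range_succ, ih]; push_cast; ring

lemma key_sum (m : ℕ) :
    ∑ t ∈ Finset.range m, ((t : ℝ) + 1) * ((m : ℝ) - 1 - t)
      = (m : ℝ) * ((m : ℝ) ^ 2 - 1) / 6 := by
  induction m with
  | zero => simp
  | succ m ih =>
    have h : ∑ t ∈ Finset.range (m + 1), ((t : ℝ) + 1) * (((m : ℕ) + 1 : ℝ) - 1 - t)
        = (∑ t ∈ Finset.range m, ((t : ℝ) + 1) * ((m : ℝ) - 1 - t))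
          + (∑ t ∈ Finset.range m, ((t : ℝ) + 1)) := by
      have e : ∀ t ∈ Finset.range m, ((t : ℝ) + 1) * (((m : ℕ) + 1 : ℝ) - 1 - t)
          = ((t : ℝ) + 1) * ((m : ℝ) - 1 - t) + ((t : ℝ) + 1) := fun t _ => by push_cast; ring
      rw [Finset.sum_range_succ, Finset.sum_congr rfl e, Finset.sum_add_distrib]
      push_cast; ring
    push_cast at h ⊢
    rw [h, ih, sum_range_cast_succ]
    ring

/-- The Bordawise distance between `ID` and `UN` for `m` candidates (`m` even) and `n`
voters is `n(m³ − m)/12`: the EMD between the sorted Borda vector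
`(n(m−1), n(m−2), ..., 0)` of `ID` and the constant vector `n(m−1)/2` of `UN` equals
`n·m(m²−1)/12`. -/
theorem stmt11 (m n : ℕ) (hm : Even m) :
    emd (fun k : Fin m => (n : ℝ) * ((m : ℝ) - 1 - ((k : ℕ) : ℝ)))
        (fun _ : Fin m => (n : ℝ) * ((m : ℝ) - 1) / 2) =
      (n : ℝ) * ((m : ℝ) * ((m : ℝ) ^ 2 - 1)) / 12 := by
  unfold emd
  have hterm : ∀ t : Fin m,
      |(∑ k ∈ Finset.Iic t, (n : ℝ) * ((m : ℝ) - 1 - ((k : ℕ) : ℝ)))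
        - (∑ k ∈ Finset.Iic t, (n : ℝ) * ((m : ℝ) - 1) / 2)|
      = (n : ℝ) * (((t : ℕ) : ℝ) + 1) * ((m : ℝ) - 1 - ((t : ℕ) : ℝ)) / 2 := by
    intro t
    have h1 : ∑ k ∈ Finset.Iic t, (n : ℝ) * ((m : ℝ) - 1 - ((k : ℕ) : ℝ))
        = ∑ k ∈ Finset.Iic (t : ℕ), (n : ℝ) * ((m : ℝ) - 1 - (k : ℝ)) := by
      rw [← Fin.map_valEmbedding_Iic, Finset.sum_map]
      rfl
    have h2 : (∑ k ∈ Finset.Iic t, (n : ℝ) * ((m : ℝ) - 1) / 2)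
        = (((t : ℕ) : ℝ) + 1) * ((n : ℝ) * ((m : ℝ) - 1) / 2) := by
      rw [Finset.sum_const, Fin.card_Iic, nsmul_eq_mul]
      push_cast; ring
    have h3 : ∑ k ∈ Finset.Iic (t : ℕ), (n : ℝ) * ((m : ℝ) - 1 - (k : ℝ))
        = (((t : ℕ) : ℝ) + 1) * ((n : ℝ) * ((m : ℝ) - 1))
          - (n : ℝ) * ((((t : ℕ) : ℝ)) * (((t : ℕ) : ℝ) + 1) / 2) := by
      have hr : ∀ s : ℕ, (Finset.Iic s) = Finset.range (s + 1) := by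
        intro s; ext a; simp [Nat.lt_succ_iff]
      rw [hr]
      induction (t : ℕ) with
      | zero => simp
      | succ s ih =>
        rw [Finset.sum_range_succ, ih]
        push_cast; ring
    rw [h1, h2, h3]
    have habs : (((t : ℕ) : ℝ) + 1) * ((n : ℝ) * ((m : ℝ) - 1))
          - (n : ℝ) * ((((t : ℕ) : ℝ)) * (((t : ℕ) : ℝ) + 1) / 2)
          - (((t : ℕ) : ℝ) + 1) * ((n : ℝ) * ((m : ℝ) - 1) / 2)
        = (n : ℝ) * (((t : ℕ) : ℝ) + 1) * ((m : ℝ) - 1 - ((t : ℕ) : ℝ)) / 2 := by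
      ring
    rw [habs, abs_of_nonneg]
    have ht : ((t : ℕ) : ℝ) ≤ (m : ℝ) - 1 := by
      have := t.isLt
      have : (t : ℕ) + 1 ≤ m := this
      have := (Nat.cast_le (α := ℝ)).2 this
      push_cast at this; linarith
    have hn : (0:ℝ) ≤ n := Nat.cast_nonneg n
    have h0 : (0:ℝ) ≤ ((t : ℕ) : ℝ) + 1 := by positivity
    have := mul_nonneg (mul_nonneg hn h0) (sub_nonneg.2 ht)
    nlinarith
  rw [Finset.sum_congr rfl (fun t _ => hterm t), Fin.sum_univ_eq_sum_range
    (fun t => (n : ℝ) * ((t : ℝ) + 1) * ((m : ℝ) - 1 - (t : ℝ)) / 2)]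
  have : ∑ t ∈ Finset.range m, (n : ℝ) * ((t : ℝ) + 1) * ((m : ℝ) - 1 - (t : ℝ)) / 2
      = (n : ℝ) / 2 * ∑ t ∈ Finset.range m, ((t : ℝ) + 1) * ((m : ℝ) - 1 - (t : ℝ)) := by
    rw [Finset.mul_sum]
    exact Finset.sum_congr rfl (fun t _ => by ring)
  rw [this, key_sum]
  ring
end

section
/- The discrete isomorphic distance between ID and UN with m candidates and n = t·m! voters equals n(m! − 1)/m!: i.e., for the election with n copies of one fixed vote and the election with t copies of each of the m! votes, the minimum over candidate bijections and vote matchings of the number of mismatched vote pairs is n − t. -/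
/-- The discrete isomorphic distance between `ID` (with `n = t·m!` copies of one fixed
vote, here the identity) and `UN` (an election `U` containing each of the `m!` possible
votes exactly `t` times) equals `n(m! − 1)/m! = n − t`: the minimum over candidate
bijections `π` and vote matchings `ρ` of the number of mismatched vote pairs is `n − t`. -/
theorem stmt18 (m n t : ℕ) (hn : n = t * Nat.factorial m)
    (U : Fin n → Equiv.Perm (Fin m))
    (hU : ∀ w : Equiv.Perm (Fin m), (Finset.univ.filter (fun i => U i = w)).card = t) :
    sInf {d : ℕ | ∃ (π : Equiv.Perm (Fin m)) (ρ : Equiv.Perm (Fin n)),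
        d = ∑ i : Fin n,
          if π.symm.trans (1 : Equiv.Perm (Fin m)) = U (ρ i) then 0 else 1} = n - t := by
  have key : ∀ (π : Equiv.Perm (Fin m)) (ρ : Equiv.Perm (Fin n)),
      (∑ i : Fin n, if π.symm.trans (1 : Equiv.Perm (Fin m)) = U (ρ i) then 0 else 1)
        = n - t := by
    intro π ρ
    set w := π.symm.trans (1 : Equiv.Perm (Fin m)) with hw
    have h1 : (∑ i : Fin n, if w = U (ρ i) then 0 else 1)
        = ∑ j : Fin n, if w = U j then 0 else 1 :=
      Fintype.sum_equiv ρ _ _ (fun i => rfl)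
    have h2 : (∑ j : Fin n, if w = U j then 0 else 1)
        = (Finset.univ.filter (fun j : Fin n => ¬ (w = U j))).card := by
      rw [Finset.card_filter]
      exact Finset.sum_congr rfl (fun j _ => by by_cases h : w = U j <;> simp [h])
    have h3 : (Finset.univ.filter (fun j : Fin n => w = U j)).card = t := by
      simpa [eq_comm] using hU w
    rw [h1, h2, Finset.filter_not, Finset.card_sdiff_of_subset (Finset.filter_subset _ _), h3,
      Finset.card_univ, Fintype.card_fin]
  have hset : {d : ℕ | ∃ (π : Equiv.Perm (Fin m)) (ρ : Equiv.Perm (Fin n)),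
      d = ∑ i : Fin n,
        if π.symm.trans (1 : Equiv.Perm (Fin m)) = U (ρ i) then 0 else 1} = {n - t} := by
    ext d
    constructor
    · rintro ⟨π, ρ, rfl⟩
      exact key π ρ
    · rintro rfl
      exact ⟨1, 1, (key 1 1).symm⟩
  rw [hset]
  exact csInf_singleton _
end
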